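/- The function B(r) = (1-r)^2 / (σ_m^2 - r^2 σ_j^2), defined for r ∈ [0,1] with σ_m^2 - r^2 σ_j^2 > 0, where σ_m, σ_j > 0, attains its minimum over feasible r at r = 1 if σ_m ≥ σ_j, and at r = (σ_m/σ_j)^2 if σ_m < σ_j. -/
import Mathlib


/-- Optimal reuse ratio minimizes `B(r) = (1-r)^2 / (σm^2 - r^2 σj^2)` over feasible `r`. -/
theorem stmt_0 (σm σj : ℝ) (hσm : 0 < σm) (hσj : 0 < σj)
    (B : ℝ → ℝ) (hB : ∀ r, B r = (1 - r)^2 / (σm^2 - r^2 * σj^2))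
    (ropt : ℝ) (hropt : ropt = if σj ≤ σm then 1 else (σm / σj)^2) :
    ∀ r, 0 ≤ r → r ≤ 1 → 0 < σm^2 - r^2 * σj^2 → B ropt ≤ B r := by
  intro r hr0 hr1 hden
  rw [hB, hB, hropt]
  split_ifs with h
  · have h1 : (1 - (1:ℝ))^2 / (σm^2 - 1^2 * σj^2) = 0 := by norm_num
    rw [h1]
    positivity
  · push_neg at h
    set ρ : ℝ := (σm / σj)^2 with hρdef
    have hρpos : 0 < ρ := by positivity
    have hρlt : ρ < 1 := by
      rw [hρdef]
      have : σm / σj < 1 := (div_lt_one hσj).mpr h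
      nlinarith [div_pos hσm hσj]
    have hσmsq : σm^2 = ρ * σj^2 := by
      rw [hρdef]; field_simp
    have hdρ : 0 < σm^2 - ρ^2 * σj^2 := by
      rw [hσmsq]
      have hσj2 : 0 < σj^2 := by positivity
      nlinarith [mul_pos (mul_pos hρpos (by linarith : (0:ℝ) < 1 - ρ)) hσj2]
    rw [div_le_div_iff₀ hdρ hden]
    have key : 0 ≤ (1 - ρ) * σj^2 * (r - ρ)^2 :=
      mul_nonneg (mul_nonneg (by linarith) (sq_nonneg _)) (sq_nonneg _)
    nlinarith [key]
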